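/- arXiv:2106.14727 — 2 statements merged into one kernel-verified Lean document; each statement's English description precedes it below -/
import Mathlib

section
/- For any buffer size B ≥ 1, the function ρ ↦ (1-ρ)ρ^B / (1-ρ^{B+1}) is strictly monotonically increasing on (0,1). -/
open Finset

/-- The M/M/1/B packet loss probability is strictly increasing in ρ on (0,1). -/
theorem mm1b_loss_strictMono (B : ℕ) (hB : 1 ≤ B) :
    StrictMonoOn (fun ρ : ℝ => (1 - ρ) * ρ ^ B / (1 - ρ ^ (B + 1))) (Set.Ioo 0 1) := by
  have key : ∀ ρ : ℝ, ρ ∈ Set.Ioo (0:ℝ) 1 →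
      (1 - ρ) * ρ ^ B / (1 - ρ ^ (B + 1)) = (∑ j ∈ range (B + 1), ρ⁻¹ ^ j)⁻¹ := by
    intro ρ hρ
    obtain ⟨h0, h1⟩ := hρ
    have hne : ρ ≠ 0 := ne_of_gt h0
    have hone : (1:ℝ) - ρ ≠ 0 := by linarith
    have hgeom : 1 - ρ ^ (B + 1) = (1 - ρ) * ∑ k ∈ range (B + 1), ρ ^ k := by
      have h := geom_sum_mul ρ (B + 1)
      linear_combination h
    have hS : (∑ j ∈ range (B + 1), ρ⁻¹ ^ j) = (∑ k ∈ range (B + 1), ρ ^ k) / ρ ^ B := by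
      rw [eq_div_iff (pow_ne_zero _ hne), Finset.sum_mul]
      rw [← Finset.sum_range_reflect (fun k => ρ ^ k) (B + 1)]
      apply Finset.sum_congr rfl
      intro j hj
      have hjB : j ≤ B := Nat.lt_succ_iff.mp (Finset.mem_range.mp hj)
      have : ρ ^ B = ρ ^ j * ρ ^ (B - j) := by
        rw [← pow_add, Nat.add_sub_cancel' hjB]
      rw [inv_pow, this, Nat.succ_sub_one]
      field_simp
    have hSpos : (0:ℝ) < ∑ k ∈ range (B + 1), ρ ^ k := by
      apply Finset.sum_pos
      · intro k _; positivity
      · exact ⟨0, Finset.mem_range.mpr (Nat.succ_pos B)⟩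
    rw [hgeom, hS, inv_div]
    rw [mul_comm (1 - ρ) (∑ k ∈ range (B + 1), ρ ^ k), mul_comm (1 - ρ) (ρ ^ B),
      mul_div_mul_right _ _ hone]
  intro x hx y hy hxy
  simp only
  rw [key x hx, key y hy]
  have hxinv : y⁻¹ < x⁻¹ := by
    apply inv_strictAnti₀ hx.1 hxy
  have hyinv0 : (0:ℝ) ≤ y⁻¹ := le_of_lt (inv_pos.mpr hy.1)
  have hsum : (∑ j ∈ range (B + 1), y⁻¹ ^ j) < ∑ j ∈ range (B + 1), x⁻¹ ^ j := by
    apply Finset.sum_lt_sum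
    · intro j _
      exact pow_le_pow_left₀ hyinv0 (le_of_lt hxinv) j
    · refine ⟨1, Finset.mem_range.mpr (by omega), ?_⟩
      simpa using hxinv
  have hSy : (0:ℝ) < ∑ j ∈ range (B + 1), y⁻¹ ^ j := by
    apply Finset.sum_pos
    · intro k _
      have : (0:ℝ) < y⁻¹ := by have := hy.1; positivity
      positivity
    · exact ⟨0, Finset.mem_range.mpr (Nat.succ_pos B)⟩
  exact inv_strictAnti₀ hSy hsum
end

section
/- The map f(λ) = λ_0·(1 - P_d(λ/μ)) on [0, λ_0], where P_d(ρ) = (1-ρ)ρ^B/(1-ρ^{B+1}) (extended by P_d(1) = 1/(B+1)) is continuous and increasing with values in [0,1), has exactly one fixed point in [0, λ_0]. -/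
/-- The map f(λ) = λ₀·(1 - P_d(λ/μ)), with P_d the M/M/1/B loss probability (extended by
P_d(1) = 1/(B+1)), has exactly one fixed point in [0, λ₀]. -/
theorem unique_fixed_point (B : ℕ) (hB : 1 ≤ B) (lam0 mu : ℝ) (hlam0 : 0 < lam0)
    (hmu : 0 < mu) (Pd : ℝ → ℝ)
    (hPd : ∀ ρ, Pd ρ = if ρ = 1 then 1 / ((B : ℝ) + 1) else (1 - ρ) * ρ ^ B / (1 - ρ ^ (B + 1)))
    (f : ℝ → ℝ) (hf : ∀ l, f l = lam0 * (1 - Pd (l / mu))) :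
    ∃! l, l ∈ Set.Icc 0 lam0 ∧ f l = l := by
  set S : ℝ → ℝ := fun ρ => ∑ k ∈ Finset.range (B + 1), ρ ^ k with hSdef
  have hSpos : ∀ ρ : ℝ, 0 ≤ ρ → 0 < S ρ := by
    intro ρ hρ
    have h1 : (1 : ℝ) ≤ S ρ := by
      have := Finset.single_le_sum (f := fun k => ρ ^ k)
        (fun k _ => pow_nonneg hρ k) (Finset.mem_range.mpr (Nat.succ_pos B))
      simpa using this
    linarith
  -- Pd agrees with ρ^B / S ρ on nonnegative ρ
  have hPd' : ∀ ρ : ℝ, 0 ≤ ρ → Pd ρ = ρ ^ B / S ρ := by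
    intro ρ hρ
    rw [hPd]
    by_cases h1 : ρ = 1
    · subst h1
      simp [hSdef]
    · have hgeom : (1 - ρ) * S ρ = 1 - ρ ^ (B + 1) := by
        have := geom_sum_mul ρ (B + 1)
        simp only [hSdef] at *
        nlinarith [this]
      have hne : (1 : ℝ) - ρ ≠ 0 := by
        intro h; apply h1; linarith
      have hSne : S ρ ≠ 0 := (hSpos ρ hρ).ne'
      rw [if_neg h1, ← hgeom]
      field_simp
  -- monotonicity of ρ ↦ ρ^B / S ρ on [0, ∞)
  have hmono : ∀ ρ1 ρ2 : ℝ, 0 ≤ ρ1 → ρ1 ≤ ρ2 → ρ1 ^ B / S ρ1 ≤ ρ2 ^ B / S ρ2 := by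
    intro ρ1 ρ2 h1 h12
    have h2 : 0 ≤ ρ2 := le_trans h1 h12
    rw [div_le_div_iff₀ (hSpos _ h1) (hSpos _ h2)]
    simp only [hSdef, Finset.mul_sum]
    apply Finset.sum_le_sum
    intro k hk
    have hkB : k ≤ B := Nat.lt_succ_iff.mp (Finset.mem_range.mp hk)
    have e1 : ρ1 ^ B = ρ1 ^ k * ρ1 ^ (B - k) := by
      rw [← pow_add, Nat.add_sub_cancel' hkB]
    have e2 : ρ2 ^ B = ρ2 ^ k * ρ2 ^ (B - k) := by
      rw [← pow_add, Nat.add_sub_cancel' hkB]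
    rw [e1, e2]
    have hle : ρ1 ^ (B - k) ≤ ρ2 ^ (B - k) := pow_le_pow_left₀ h1 h12 _
    have n1 : 0 ≤ ρ1 ^ k := pow_nonneg h1 k
    have n2 : 0 ≤ ρ2 ^ k := pow_nonneg h2 k
    have n3 : 0 ≤ ρ1 ^ (B - k) := pow_nonneg h1 _
    have hkey := mul_le_mul_of_nonneg_left hle (mul_nonneg n1 n2)
    nlinarith [hkey]
  -- the auxiliary continuous function g
  set g : ℝ → ℝ := fun l => lam0 * (1 - (l / mu) ^ B / S (l / mu)) - l with hgdef
  have hval : ∀ l : ℝ, 0 ≤ l → f l = g l + l := by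
    intro l hl
    have hρ : 0 ≤ l / mu := div_nonneg hl hmu.le
    rw [hf, hPd' _ hρ, hgdef]
    ring
  have hScont : Continuous S := by
    apply continuous_finset_sum
    intro i _
    exact continuous_pow i
  have hgcont : ContinuousOn g (Set.Icc 0 lam0) := by
    apply ContinuousOn.sub _ continuousOn_id
    apply ContinuousOn.mul continuousOn_const
    apply ContinuousOn.sub continuousOn_const
    apply ContinuousOn.div
    · exact ((continuous_pow B).comp (continuous_id.div_const mu)).continuousOn
    · exact (hScont.comp (continuous_id.div_const mu)).continuousOn
    · intro x hx
      exact (hSpos _ (div_nonneg hx.1 hmu.le)).ne'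
  have hg0 : g 0 = lam0 := by
    have hB0 : (0 : ℝ) ^ B = 0 := zero_pow (by omega)
    simp [hgdef, hB0]
  have hglam0 : g lam0 ≤ 0 := by
    have hρ : 0 ≤ lam0 / mu := div_nonneg hlam0.le hmu.le
    have hq : 0 ≤ (lam0 / mu) ^ B / S (lam0 / mu) :=
      div_nonneg (pow_nonneg hρ B) (hSpos _ hρ).le
    simp only [hgdef]
    nlinarith
  -- existence via IVT
  have hsub := intermediate_value_Icc' hlam0.le hgcont
  have h0mem : (0 : ℝ) ∈ Set.Icc (g lam0) (g 0) := ⟨hglam0, by rw [hg0]; exact hlam0.le⟩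
  obtain ⟨l, hlmem, hgl⟩ := hsub h0mem
  have hfix : f l = l := by rw [hval l hlmem.1, hgl, zero_add]
  -- uniqueness
  have key : ∀ a b, a ∈ Set.Icc (0:ℝ) lam0 → b ∈ Set.Icc (0:ℝ) lam0 →
      f a = a → f b = b → a ≤ b → b ≤ a := by
    intro a b ha hb hfa hfb hab
    have hρa : 0 ≤ a / mu := div_nonneg ha.1 hmu.le
    have hρab : a / mu ≤ b / mu := (div_le_div_iff_of_pos_right hmu).mpr hab
    have hPdle : Pd (a / mu) ≤ Pd (b / mu) := by
      rw [hPd' _ hρa, hPd' _ (le_trans hρa hρab)]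
      exact hmono _ _ hρa hρab
    have : f b ≤ f a := by
      rw [hf, hf]
      nlinarith
    rw [hfa, hfb] at this
    exact this
  refine ⟨l, ⟨hlmem, hfix⟩, ?_⟩
  rintro y ⟨hymem, hyfix⟩
  rcases le_total y l with h | h
  · exact le_antisymm h (key y l hymem hlmem hyfix hfix h)
  · exact le_antisymm (key l y hlmem hymem hfix hyfix h) h
end
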